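/- The ratio of the number of nonsquarefree numbers to the number of squarefree numbers up to N tends to π²/6 − 1: the quantity (#{n : 1 ≤ n ≤ N and n is not squarefree})/(#{n : 1 ≤ n ≤ N and n is squarefree}) tends to π²/6 − 1 as N → ∞. -/

import Mathlib

/-! Since `d ∣ floorRoot 2 n ↔ d ^ 2 ∣ n`, Möbius inversion over the divisors of `floorRoot 2 n`
detects squarefreeness, and exchanging the order of summation gives
`#{n ≤ N squarefree} = ∑_{d ≤ √N} μ d ⌊N / d²⌋`. Dropping the floors costs at most `√N + 1`, so
the squarefree density is `∑ μ d / d² = 1 / ζ 2 = 6 / π²`, and the ratio in question is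
`N / #{n ≤ N squarefree} - 1`. -/

open Filter Real Finset ArithmeticFunction
open scoped ArithmeticFunction.Moebius Topology

namespace Nat

theorem floorRoot_two_eq_one_iff_squarefree {n : ℕ} : floorRoot 2 n = 1 ↔ Squarefree n := by
  rw [squarefree_iff_prime_squarefree, eq_one_iff_not_exists_prime_dvd]
  refine forall_congr' fun p => imp_congr Iff.rfl (not_congr ?_)
  rw [← pow_dvd_iff_dvd_floorRoot, pow_two]

theorem sum_moebius_divisors_floorRoot_two (n : ℕ) :
    ∑ d ∈ (floorRoot 2 n).divisors, μ d = if Squarefree n then 1 else 0 := by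
  rw [← coe_mul_zeta_apply, moebius_mul_coe_zeta, one_apply]
  simp only [floorRoot_two_eq_one_iff_squarefree]

theorem tendsto_sqrt_atTop : Tendsto sqrt atTop atTop :=
  tendsto_atTop_atTop.2 fun b => ⟨b ^ 2, fun _ => le_sqrt'.2⟩

end Nat

theorem card_filter_squarefree_Icc_eq_sum (N : ℕ) :
    (#{n ∈ Icc 1 N | Squarefree n} : ℤ) = ∑ d ∈ range (N.sqrt + 1), μ d * (N / d ^ 2 : ℕ) := by
  have hswap (n d : ℕ) : n ∈ Ioc 0 N ∧ d ∈ (Nat.floorRoot 2 n).divisors ↔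
      n ∈ {n ∈ Ioc 0 N | d ^ 2 ∣ n} ∧ d ∈ range (N.sqrt + 1) := by
    simp only [mem_Ioc, Nat.mem_divisors, mem_filter, mem_range, Nat.lt_succ_iff, Nat.le_sqrt',
      ← Nat.pow_dvd_iff_dvd_floorRoot, ne_eq, Nat.floorRoot_eq_zero]
    constructor
    · rintro ⟨⟨hn, hnN⟩, hd, -⟩
      exact ⟨⟨⟨hn, hnN⟩, hd⟩, (Nat.le_of_dvd hn hd).trans hnN⟩
    · rintro ⟨⟨⟨hn, hnN⟩, hd⟩, -⟩
      exact ⟨⟨hn, hnN⟩, hd, by omega⟩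
  calc (#{n ∈ Icc 1 N | Squarefree n} : ℤ)
      = ∑ n ∈ Ioc 0 N, ∑ d ∈ (Nat.floorRoot 2 n).divisors, μ d := by
        rw [← Icc_add_one_left_eq_Ioc, card_filter]
        push_cast
        exact sum_congr rfl fun n _ => (Nat.sum_moebius_divisors_floorRoot_two n).symm
    _ = ∑ d ∈ range (N.sqrt + 1), ∑ n ∈ Ioc 0 N with d ^ 2 ∣ n, μ d := sum_comm' hswap
    _ = ∑ d ∈ range (N.sqrt + 1), μ d * (N / d ^ 2 : ℕ) := by
        simp [Nat.Ioc_filter_dvd_card_eq_div, mul_comm]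

theorem abs_natCast_div_sub_div_le_one (m n : ℕ) : |((m / n : ℕ) : ℝ) - m / n| ≤ 1 := by
  rw [← Nat.floor_div_eq_div (K := ℝ), abs_sub_le_iff]
  constructor
  · linarith [Nat.floor_le (R := ℝ) (by positivity : (0:ℝ) ≤ m / n)]
  · linarith [Nat.lt_floor_add_one ((m:ℝ) / n)]

theorem abs_card_filter_squarefree_Icc_sub_le (N : ℕ) :
    |(#{n ∈ Icc 1 N | Squarefree n} : ℝ) - N * ∑ d ∈ range (N.sqrt + 1), (μ d : ℝ) / d ^ 2|
      ≤ N.sqrt + 1 := by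
  have hcount := congrArg (Int.cast : ℤ → ℝ) (card_filter_squarefree_Icc_eq_sum N)
  push_cast at hcount
  rw [hcount, mul_sum, ← sum_sub_distrib]
  calc |∑ d ∈ range (N.sqrt + 1), ((μ d : ℝ) * (N / d ^ 2 : ℕ) - N * (μ d / d ^ 2))|
      ≤ ∑ d ∈ range (N.sqrt + 1), |(μ d : ℝ)| * |((N / d ^ 2 : ℕ) : ℝ) - N / (d ^ 2 : ℕ)| := by
        refine (abs_sum_le_sum_abs _ _).trans_eq (sum_congr rfl fun d _ => ?_)
        rw [← abs_mul]; push_cast; ring_nf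
    _ ≤ ∑ d ∈ range (N.sqrt + 1), 1 := by
        gcongr with d
        exact mul_le_one₀ (by exact_mod_cast abs_moebius_le_one) (abs_nonneg _)
          (abs_natCast_div_sub_div_le_one _ _)
    _ = N.sqrt + 1 := by simp

theorem hasSum_moebius_div_sq : HasSum (fun n : ℕ => (μ n : ℝ) / n ^ 2) (6 / π ^ 2) := by
  have h2 : 1 < (2 : ℂ).re := by norm_num
  have hL : LSeries (fun n => (μ n : ℂ)) 2 = 6 / π ^ 2 := by
    have hζμ := LSeries_zeta_mul_Lseries_moebius h2
    rw [LSeries_zeta_eq_riemannZeta h2, riemannZeta_two] at hζμ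
    rw [eq_div_iff (by simp [pi_ne_zero])]
    linear_combination 6 * hζμ
  have h := (LSeriesSummable_moebius_iff.2 h2).LSeriesHasSum
  rw [hL, LSeriesHasSum] at h
  refine Complex.hasSum_ofReal.1 ?_
  convert h using 1
  · funext n
    rcases eq_or_ne n 0 with rfl | hn
    · simp
    · simp [LSeries.term_of_ne_zero hn]
  · norm_cast

theorem tendsto_natSqrt_add_one_div_atTop :
    Tendsto (fun N : ℕ => ((N.sqrt : ℝ) + 1) / N) atTop (𝓝 0) := by
  have hsqrt : Tendsto (fun N : ℕ => (N.sqrt : ℝ) / N) atTop (𝓝 0) := by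
    refine squeeze_zero (fun N => by positivity) (fun N => ?_)
      (tendsto_inv_atTop_zero.comp (tendsto_sqrt_atTop.comp tendsto_natCast_atTop_atTop))
    rw [Function.comp_apply, Function.comp_apply, ← one_div, ← sqrt_div_self']
    gcongr
    exact nat_sqrt_le_real_sqrt
  simpa only [add_div, add_zero] using hsqrt.add tendsto_one_div_atTop_nhds_zero_nat

theorem tendsto_card_filter_squarefree_Icc_div :
    Tendsto (fun N : ℕ => (#{n ∈ Icc 1 N | Squarefree n} : ℝ) / N) atTop (𝓝 (6 / π ^ 2)) := by
  have hpartial : Tendsto (fun N : ℕ => ∑ d ∈ range (N.sqrt + 1), (μ d : ℝ) / d ^ 2) atTop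
      (𝓝 (6 / π ^ 2)) :=
    hasSum_moebius_div_sq.tendsto_sum_nat.comp
      ((tendsto_add_atTop_nat 1).comp Nat.tendsto_sqrt_atTop)
  have herror : Tendsto (fun N : ℕ => (#{n ∈ Icc 1 N | Squarefree n} : ℝ) / N
      - ∑ d ∈ range (N.sqrt + 1), (μ d : ℝ) / d ^ 2) atTop (𝓝 0) := by
    refine squeeze_zero_norm' ?_ tendsto_natSqrt_add_one_div_atTop
    filter_upwards [eventually_gt_atTop 0] with N hN
    have hN' : (0 : ℝ) < N := by exact_mod_cast hN
    rw [norm_eq_abs, ← mul_div_cancel_left₀ (∑ d ∈ range (N.sqrt + 1), (μ d : ℝ) / d ^ 2) hN'.ne',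
      ← sub_div, abs_div, abs_of_pos hN']
    gcongr
    exact abs_card_filter_squarefree_Icc_sub_le N
  simpa using herror.add hpartial

theorem ratio_nonsquarefree_to_squarefree :
    Filter.Tendsto
      (fun N : ℕ =>
        (((Finset.Icc 1 N).filter (fun n => ¬ Squarefree n)).card : ℝ)
          / (((Finset.Icc 1 N).filter (fun n => Squarefree n)).card : ℝ))
      Filter.atTop (nhds (Real.pi ^ 2 / 6 - 1)) := by
  have h := (tendsto_card_filter_squarefree_Icc_div.inv₀ (by positivity)).sub_const 1
  rw [inv_div] at h
  refine h.congr' ?_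
  filter_upwards [eventually_ge_atTop 1] with N hN
  have hpos : (0 : ℝ) < #{n ∈ Icc 1 N | Squarefree n} := by
    exact_mod_cast card_pos.2 ⟨1, by simp [hN]⟩
  have hsplit : (#{n ∈ Icc 1 N | ¬Squarefree n} : ℝ) = N - #{n ∈ Icc 1 N | Squarefree n} := by
    rw [eq_sub_iff_add_eq', ← Nat.cast_add, card_filter_add_card_filter_not, Nat.card_Icc,
      Nat.add_sub_cancel]
  rw [hsplit, inv_div]
  field_simp
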